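/- For all y > 0, we have (h_1^{-1}(y))² < y + y², where h_1(x) = x·tanh(x) on (0, ∞). -/

import Mathlib

/-!
Write `y = x tanh x` with `x > 0`. Since `tanh² x = 1 - 1 / cosh² x`, the inequality
`x² < y + y²` is equivalent to `x / cosh² x < tanh x`, i.e. to `x < sinh x cosh x = sinh (2x) / 2`,
which holds because `sinh t > t` for `t > 0`.
-/

open Real

lemma self_lt_sinh_mul_cosh {x : ℝ} (hx : 0 < x) : x < sinh x * cosh x :=
  calc x < sinh x := self_lt_sinh_iff.mpr hx
    _ ≤ sinh x * cosh x :=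
      le_mul_of_one_le_right (sinh_pos_iff.mpr hx).le (one_le_cosh x)

lemma sq_lt_mul_tanh_add_sq {x : ℝ} (hx : 0 < x) : x ^ 2 < x * tanh x + (x * tanh x) ^ 2 := by
  have hcosh : 0 < cosh x := cosh_pos x
  have key : x * (cosh x ^ 2 - sinh x ^ 2) < sinh x * cosh x := by
    rw [cosh_sq_sub_sinh_sq, mul_one]
    exact self_lt_sinh_mul_cosh hx
  rw [tanh_eq_sinh_div_cosh, ← sub_pos]
  have expand : x * (sinh x / cosh x) + (x * (sinh x / cosh x)) ^ 2 - x ^ 2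
      = x * (sinh x * cosh x - x * (cosh x ^ 2 - sinh x ^ 2)) / cosh x ^ 2 := by
    field_simp
    ring
  rw [expand]
  have hgap := sub_pos.mpr key
  positivity

theorem h1inv_sq_upper_general (hinv : ℝ → ℝ)
    (h_right : ∀ y ∈ Set.Ioi (0:ℝ),
      hinv y > 0 ∧ hinv y * Real.tanh (hinv y) = y) :
    ∀ y > (0:ℝ), (hinv y) ^ 2 < y + y ^ 2 := by
  intro y hy
  obtain ⟨hpos, hy_eq⟩ := h_right y hy
  simpa only [hy_eq] using sq_lt_mul_tanh_add_sq hpos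

/-- For all `y > 0`, `(h₁⁻¹ y)² < y + y²`, where `h₁(x) = x·tanh x` on `(0, ∞)`. -/
theorem h1inv_sq_upper (hinv : ℝ → ℝ)
    (h_left : ∀ x > (0:ℝ), hinv (x * Real.tanh x) = x)
    (h_right : ∀ y ∈ Set.Ioi (0:ℝ),
      hinv y > 0 ∧ hinv y * Real.tanh (hinv y) = y) :
    ∀ y > (0:ℝ), (hinv y) ^ 2 < y + y ^ 2 :=
  h1inv_sq_upper_general hinv h_right
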